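/- Let \(X_1, \ldots, X_n\) be a martingale difference sequence (\(\mathbb{E}[X_i \mid \mathcal{G}_{i-1}] = 0\)) with \(|X_i| \le c\) almost surely. If additionally \(\sum_{i=1}^n \mathbb{E}[X_i^2 \mid \mathcal{G}_{i-1}] \le V\) almost surely for a constant \(V \ge 0\), then for any \(0 < \delta < 1\), with probability at least \(1-\delta\): \(\left|\sum_{i=1}^n X_i\right| \le \sqrt{4V \log(2n/\delta)} + \sqrt{5}\, c \log(2n/\delta).\) -/

import Mathlib

open MeasureTheory

lemma my_exp_le {x : ℝ} (hx : x ≤ 1) : Real.exp x ≤ 1 + x + x ^ 2 := by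
  rcases le_or_gt (-1) x with h | h
  · have h1 : |x| ≤ 1 := abs_le.2 ⟨h, hx⟩
    have := Real.exp_bound h1 (n := 2) (by norm_num)
    have h2 : (∑ i ∈ Finset.range 2, x ^ i / i.factorial) = 1 + x := by
      simp [Finset.sum_range_succ]
    rw [h2] at this
    have h3 : |x| ^ 2 = x ^ 2 := by rw [sq_abs]
    have h4 := (abs_le.1 this).2
    rw [h3] at h4
    norm_num [Nat.factorial] at h4
    nlinarith [sq_nonneg x]
  · have h1 : Real.exp x < 1 := Real.exp_lt_one_iff.2 (by linarith)
    nlinarith [sq_nonneg x]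

lemma my_int_of_bdd {Ω : Type*} {m0 : MeasurableSpace Ω} {μ : Measure Ω} [IsProbabilityMeasure μ]
    {f : Ω → ℝ} (hf : AEStronglyMeasurable f μ) {C : ℝ} (h : ∀ᵐ ω ∂μ, |f ω| ≤ C) :
    Integrable f μ :=
  (integrable_const C).mono' hf (h.mono fun ω hω => by rwa [Real.norm_eq_abs])

lemma my_mgf_bound {Ω : Type*} {m0 : MeasurableSpace Ω} (μ : Measure Ω) [IsProbabilityMeasure μ]
    (𝒢 : Filtration ℕ m0) (n : ℕ) (X : ℕ → Ω → ℝ)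
    (hmeas : ∀ i ∈ Finset.Icc 1 n, StronglyMeasurable[𝒢 i] (X i))
    (c : ℝ) (hc : 0 < c)
    (hcond : ∀ i ∈ Finset.Icc 1 n, μ[X i | 𝒢 (i - 1)] =ᵐ[μ] 0)
    (hbdd : ∀ i ∈ Finset.Icc 1 n, ∀ᵐ ω ∂μ, |X i ω| ≤ c)
    (l : ℝ) (hl : 0 ≤ l) (hlc : l * c ≤ 1) :
    ∫ ω, Real.exp (l * ∑ i ∈ Finset.Icc 1 n, X i ω
      - l ^ 2 * ∑ i ∈ Finset.Icc 1 n, (μ[(X i) ^ 2 | 𝒢 (i - 1)]) ω) ∂μ ≤ 1 := by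
  induction n with
  | zero => simp
  | succ n ih =>
    have hsub : ∀ i, i ∈ Finset.Icc 1 n → i ∈ Finset.Icc 1 (n + 1) := by
      intro i hi
      simp only [Finset.mem_Icc] at hi ⊢; omega
    -- notation
    set σ : ℕ → Ω → ℝ := fun i => μ[(X i) ^ 2 | 𝒢 (i - 1)] with hσ
    -- ambient measurability of X i
    have hXm : ∀ i ∈ Finset.Icc 1 (n+1), StronglyMeasurable (X i) :=
      fun i hi => (hmeas i hi).mono (𝒢.le i)
    -- a.e. bounds, all at once
    have hball : ∀ᵐ ω ∂μ, ∀ i ∈ Finset.Icc 1 (n+1), |X i ω| ≤ c :=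
      (Filter.eventually_all_finset _).2 hbdd
    have hσnn : ∀ᵐ ω ∂μ, ∀ i ∈ Finset.Icc 1 (n+1), 0 ≤ σ i ω :=
      (Filter.eventually_all_finset _).2 fun i _ =>
        condExp_nonneg (Filter.Eventually.of_forall fun ω => sq_nonneg _)
    -- the 𝒢 n-measurable part
    set g : Ω → ℝ := fun ω =>
      Real.exp (l * ∑ i ∈ Finset.Icc 1 n, X i ω - l ^ 2 * ∑ i ∈ Finset.Icc 1 (n+1), σ i ω)
      with hg
    have hgm : StronglyMeasurable[𝒢 n] g := by
      apply Real.continuous_exp.comp_stronglyMeasurable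
      apply StronglyMeasurable.sub
      · exact (Finset.stronglyMeasurable_fun_sum _ fun i hi =>
          (hmeas i (hsub i hi)).mono (𝒢.mono (Finset.mem_Icc.1 hi).2)).const_mul l
      · refine (Finset.stronglyMeasurable_fun_sum _ fun i hi => ?_).const_mul (l ^ 2)
        exact stronglyMeasurable_condExp.mono (𝒢.mono (by
          have := (Finset.mem_Icc.1 hi).2; omega))
    have hgb : ∀ᵐ ω ∂μ, |g ω| ≤ Real.exp (l * (n * c)) := by
      filter_upwards [hball, hσnn] with ω hb hs
      rw [hg, abs_of_pos (Real.exp_pos _), Real.exp_le_exp]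
      have h1 : ∑ i ∈ Finset.Icc 1 n, X i ω ≤ n * c := by
        calc ∑ i ∈ Finset.Icc 1 n, X i ω ≤ ∑ i ∈ Finset.Icc 1 n, c :=
              Finset.sum_le_sum fun i hi => (abs_le.1 (hb i (hsub i hi))).2
          _ = n * c := by
              rw [Finset.sum_const, Nat.card_Icc, Nat.add_sub_cancel, nsmul_eq_mul]
      have h2 : 0 ≤ ∑ i ∈ Finset.Icc 1 (n+1), σ i ω :=
        Finset.sum_nonneg fun i hi => hs i hi
      nlinarith [mul_le_mul_of_nonneg_left h1 hl, mul_nonneg (sq_nonneg l) h2]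
    have hgint : Integrable g μ := my_int_of_bdd ((hgm.mono (𝒢.le n)).aestronglyMeasurable) hgb
    -- the new increment
    have hmem : (n+1) ∈ Finset.Icc 1 (n+1) := by simp
    set Y : Ω → ℝ := X (n+1) with hY
    have hYm : StronglyMeasurable Y := hXm _ hmem
    have hYb : ∀ᵐ ω ∂μ, |Y ω| ≤ c := hbdd _ hmem
    have hYint : Integrable Y μ := my_int_of_bdd hYm.aestronglyMeasurable hYb
    have hY2int : Integrable (Y ^ 2) μ := by
      refine my_int_of_bdd ((hYm.pow 2).aestronglyMeasurable) (C := c ^ 2) ?_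
      filter_upwards [hYb] with ω hb
      simp only [Pi.pow_apply, abs_pow]
      exact pow_le_pow_left₀ (abs_nonneg _) hb 2
    set h : Ω → ℝ := fun ω => Real.exp (l * Y ω) with hh
    have hhm : StronglyMeasurable h :=
      Real.continuous_exp.comp_stronglyMeasurable (hYm.const_mul l)
    have hhb : ∀ᵐ ω ∂μ, |h ω| ≤ Real.exp (l * c) := by
      filter_upwards [hYb] with ω hb
      rw [hh, abs_of_pos (Real.exp_pos _), Real.exp_le_exp]
      exact mul_le_mul_of_nonneg_left ((abs_le.1 hb).2) hl
    have hhint : Integrable h μ := my_int_of_bdd hhm.aestronglyMeasurable hhb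
    -- conditional bound : μ[h | 𝒢 n] ≤ᵐ exp(l² σ (n+1))
    have hq : h ≤ᵐ[μ] (fun _ => (1:ℝ)) + l • Y + l ^ 2 • Y ^ 2 := by
      filter_upwards [hYb] with ω hb
      have h1 : l * Y ω ≤ 1 := le_trans
        (mul_le_mul_of_nonneg_left ((abs_le.1 hb).2) hl) hlc
      have := my_exp_le h1
      simp only [Pi.add_apply, Pi.smul_apply, Pi.pow_apply, smul_eq_mul, hh]
      nlinarith
    have hqint : Integrable ((fun _ => (1:ℝ)) + l • Y + l ^ 2 • Y ^ 2) μ :=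
      ((integrable_const 1).add (hYint.smul l)).add (hY2int.smul (l ^ 2))
    have hcond' : μ[h | 𝒢 n] ≤ᵐ[μ] fun ω => Real.exp (l ^ 2 * σ (n+1) ω) := by
      have step1 : μ[h | 𝒢 n] ≤ᵐ[μ] μ[(fun _ => (1:ℝ)) + l • Y + l ^ 2 • Y ^ 2 | 𝒢 n] :=
        condExp_mono hhint hqint hq
      have step2 : μ[(fun _ => (1:ℝ)) + l • Y + l ^ 2 • Y ^ 2 | 𝒢 n]
          =ᵐ[μ] fun ω => 1 + l ^ 2 * σ (n+1) ω := by
        have e1 := condExp_add (μ := μ) (m := 𝒢 n) ((integrable_const (1:ℝ)).add (hYint.smul l))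
          (hY2int.smul (l ^ 2))
        have e2 := condExp_add (μ := μ) (m := 𝒢 n) (integrable_const (1:ℝ)) (hYint.smul l)
        have e3 := condExp_smul (μ := μ) (m := 𝒢 n) l Y
        have e4 := condExp_smul (μ := μ) (m := 𝒢 n) (l ^ 2) (Y ^ 2)
        have e5 : μ[Y | 𝒢 n] =ᵐ[μ] 0 := by
          have := hcond (n+1) hmem
          simpa using this
        have e6 : μ[(fun _ => (1:ℝ)) | 𝒢 n] = fun _ => (1:ℝ) := condExp_const (𝒢.le n) 1
        have e7 : μ[Y ^ 2 | 𝒢 n] = σ (n+1) := by simp [hσ, hY]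
        filter_upwards [e1, e2, e3, e4, e5] with ω h1 h2 h3 h4 h5
        simp only [Pi.add_apply] at h1 h2
        rw [h1, h2, e6, h3, h4, e7]
        simp only [Pi.smul_apply, smul_eq_mul, Pi.zero_apply] at h5 ⊢
        rw [h5]
        ring
      calc μ[h | 𝒢 n] ≤ᵐ[μ] _ := step1
        _ =ᵐ[μ] fun ω => 1 + l ^ 2 * σ (n+1) ω := step2
        _ ≤ᵐ[μ] fun ω => Real.exp (l ^ 2 * σ (n+1) ω) :=
          Filter.Eventually.of_forall fun ω => by
            dsimp only
            have := Real.add_one_le_exp (l ^ 2 * σ (n+1) ω); linarith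
    -- now the chain of integrals
    have hsplit : ∀ ω, Real.exp (l * ∑ i ∈ Finset.Icc 1 (n+1), X i ω
        - l ^ 2 * ∑ i ∈ Finset.Icc 1 (n+1), σ i ω) = g ω * h ω := by
      intro ω
      rw [hg, hh, ← Real.exp_add]
      congr 1
      rw [Finset.sum_Icc_succ_top (by omega : 1 ≤ n + 1)]
      ring
    have hghint : Integrable (g * h) μ := by
      refine my_int_of_bdd ((hgm.mono (𝒢.le n)).mul hhm).aestronglyMeasurable
        (C := Real.exp (l * (n * c)) * Real.exp (l * c)) ?_
      filter_upwards [hgb, hhb] with ω h1 h2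
      rw [Pi.mul_apply, abs_mul]
      exact mul_le_mul h1 h2 (abs_nonneg _) (Real.exp_pos _).le
    have hpull : μ[g * h | 𝒢 n] =ᵐ[μ] g * μ[h | 𝒢 n] :=
      condExp_stronglyMeasurable_mul_of_bound (𝒢.le n) hgm hhint _ (by
        filter_upwards [hgb] with ω h1
        rwa [Real.norm_eq_abs])
    have htarget_int : Integrable (fun ω => g ω * Real.exp (l ^ 2 * σ (n+1) ω)) μ := by
      have : (fun ω => g ω * Real.exp (l ^ 2 * σ (n+1) ω))
          = fun ω => Real.exp (l * ∑ i ∈ Finset.Icc 1 n, X i ω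
            - l ^ 2 * ∑ i ∈ Finset.Icc 1 n, σ i ω) := by
        funext ω
        rw [hg, ← Real.exp_add]
        congr 1
        rw [Finset.sum_Icc_succ_top (by omega : 1 ≤ n + 1)]
        ring
      rw [this]
      refine my_int_of_bdd ?_ (C := Real.exp (l * (n * c))) ?_
      · refine (Real.continuous_exp.comp_stronglyMeasurable ?_).aestronglyMeasurable
        apply StronglyMeasurable.sub
        · exact (Finset.stronglyMeasurable_fun_sum _ fun i hi =>
            (hXm i (hsub i hi))).const_mul l
        · exact (Finset.stronglyMeasurable_fun_sum _ fun i hi =>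
            (stronglyMeasurable_condExp.mono (𝒢.le _))).const_mul (l ^ 2)
      · filter_upwards [hball, hσnn] with ω hb hs
        rw [abs_of_pos (Real.exp_pos _), Real.exp_le_exp]
        have h1 : ∑ i ∈ Finset.Icc 1 n, X i ω ≤ n * c := by
          calc ∑ i ∈ Finset.Icc 1 n, X i ω ≤ ∑ i ∈ Finset.Icc 1 n, c :=
                Finset.sum_le_sum fun i hi => (abs_le.1 (hb i (hsub i hi))).2
            _ = n * c := by
                rw [Finset.sum_const, Nat.card_Icc, Nat.add_sub_cancel, nsmul_eq_mul]
        have h2 : 0 ≤ ∑ i ∈ Finset.Icc 1 n, σ i ω :=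
          Finset.sum_nonneg fun i hi => hs i (hsub i hi)
        nlinarith [mul_le_mul_of_nonneg_left h1 hl, mul_nonneg (sq_nonneg l) h2]
    calc ∫ ω, Real.exp (l * ∑ i ∈ Finset.Icc 1 (n+1), X i ω
          - l ^ 2 * ∑ i ∈ Finset.Icc 1 (n+1), σ i ω) ∂μ
        = ∫ ω, (g * h) ω ∂μ := by
          exact integral_congr_ae (Filter.Eventually.of_forall fun ω => hsplit ω)
      _ = ∫ ω, (μ[g * h | 𝒢 n]) ω ∂μ := (integral_condExp (𝒢.le n)).symm
      _ = ∫ ω, (g * μ[h | 𝒢 n]) ω ∂μ := integral_congr_ae hpull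
      _ ≤ ∫ ω, g ω * Real.exp (l ^ 2 * σ (n+1) ω) ∂μ := by
          refine integral_mono_ae (integrable_condExp.congr hpull) htarget_int ?_
          filter_upwards [hcond', hσnn] with ω h1 _
          have hg0 : 0 ≤ g ω := (Real.exp_pos _).le
          exact mul_le_mul_of_nonneg_left h1 hg0
      _ = ∫ ω, Real.exp (l * ∑ i ∈ Finset.Icc 1 n, X i ω
            - l ^ 2 * ∑ i ∈ Finset.Icc 1 n, σ i ω) ∂μ := by
          refine integral_congr_ae (Filter.Eventually.of_forall fun ω => ?_)
          dsimp only
          rw [← Real.exp_add]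
          congr 1
          rw [Finset.sum_Icc_succ_top (by omega : 1 ≤ n + 1)]
          ring
      _ ≤ 1 := ih (fun i hi => hmeas i (hsub i hi)) (fun i hi => hcond i (hsub i hi))
            (fun i hi => hbdd i (hsub i hi))
lemma my_tail {Ω : Type*} {m0 : MeasurableSpace Ω} (μ : Measure Ω) [IsProbabilityMeasure μ]
    (𝒢 : Filtration ℕ m0) (n : ℕ) (X : ℕ → Ω → ℝ)
    (hmeas : ∀ i ∈ Finset.Icc 1 n, StronglyMeasurable[𝒢 i] (X i))
    (c : ℝ) (hc : 0 < c)
    (hcond : ∀ i ∈ Finset.Icc 1 n, μ[X i | 𝒢 (i - 1)] =ᵐ[μ] 0)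
    (hbdd : ∀ i ∈ Finset.Icc 1 n, ∀ᵐ ω ∂μ, |X i ω| ≤ c)
    (V : ℝ) (hV : 0 ≤ V)
    (hvar : ∀ᵐ ω ∂μ, ∑ i ∈ Finset.Icc 1 n, (μ[(X i) ^ 2 | 𝒢 (i - 1)]) ω ≤ V)
    (l t : ℝ) (hl : 0 ≤ l) (hlc : l * c ≤ 1) :
    μ {ω | t < ∑ i ∈ Finset.Icc 1 n, X i ω}
      ≤ ENNReal.ofReal (Real.exp (l ^ 2 * V - l * t)) := by
  have hmgf := my_mgf_bound μ 𝒢 n X hmeas c hc hcond hbdd l hl hlc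
  have hball : ∀ᵐ ω ∂μ, ∀ i ∈ Finset.Icc 1 n, |X i ω| ≤ c :=
    (Filter.eventually_all_finset _).2 hbdd
  have hSb : ∀ᵐ ω ∂μ, ∑ i ∈ Finset.Icc 1 n, X i ω ≤ n * c := by
    filter_upwards [hball] with ω hb
    calc ∑ i ∈ Finset.Icc 1 n, X i ω ≤ ∑ i ∈ Finset.Icc 1 n, c :=
          Finset.sum_le_sum fun i hi => (abs_le.1 (hb i hi)).2
      _ = n * c := by rw [Finset.sum_const, Nat.card_Icc, Nat.add_sub_cancel, nsmul_eq_mul]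
  have hSm : StronglyMeasurable (fun ω => ∑ i ∈ Finset.Icc 1 n, X i ω) :=
    Finset.stronglyMeasurable_fun_sum _ fun i hi => (hmeas i hi).mono (𝒢.le i)
  have hint1 : Integrable (fun ω => Real.exp (l * ∑ i ∈ Finset.Icc 1 n, X i ω)) μ := by
    refine my_int_of_bdd (Real.continuous_exp.comp_stronglyMeasurable
      (hSm.const_mul l)).aestronglyMeasurable (C := Real.exp (l * (n * c))) ?_
    filter_upwards [hSb] with ω hb
    rw [abs_of_pos (Real.exp_pos _), Real.exp_le_exp]
    exact mul_le_mul_of_nonneg_left hb hl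
  have hintT : Integrable (fun ω => Real.exp (l * ∑ i ∈ Finset.Icc 1 n, X i ω
      - l ^ 2 * ∑ i ∈ Finset.Icc 1 n, (μ[(X i) ^ 2 | 𝒢 (i - 1)]) ω)) μ := by
    have hσnn : ∀ᵐ ω ∂μ, ∀ i ∈ Finset.Icc 1 n, 0 ≤ (μ[(X i) ^ 2 | 𝒢 (i - 1)]) ω :=
      (Filter.eventually_all_finset _).2 fun i _ =>
        condExp_nonneg (Filter.Eventually.of_forall fun ω => sq_nonneg _)
    refine my_int_of_bdd ?_ (C := Real.exp (l * (n * c))) ?_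
    · refine (Real.continuous_exp.comp_stronglyMeasurable ?_).aestronglyMeasurable
      exact (hSm.const_mul l).sub ((Finset.stronglyMeasurable_fun_sum _ fun i hi =>
        stronglyMeasurable_condExp.mono (𝒢.le _)).const_mul (l ^ 2))
    · filter_upwards [hSb, hσnn] with ω hb hs
      rw [abs_of_pos (Real.exp_pos _), Real.exp_le_exp]
      have h2 : 0 ≤ ∑ i ∈ Finset.Icc 1 n, (μ[(X i) ^ 2 | 𝒢 (i - 1)]) ω :=
        Finset.sum_nonneg hs
      nlinarith [mul_le_mul_of_nonneg_left hb hl, mul_nonneg (sq_nonneg l) h2]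
  have hES : ∫ ω, Real.exp (l * ∑ i ∈ Finset.Icc 1 n, X i ω) ∂μ
      ≤ Real.exp (l ^ 2 * V) := by
    have hmono : (fun ω => Real.exp (l * ∑ i ∈ Finset.Icc 1 n, X i ω))
        ≤ᵐ[μ] fun ω => Real.exp (l ^ 2 * V) * Real.exp (l * ∑ i ∈ Finset.Icc 1 n, X i ω
          - l ^ 2 * ∑ i ∈ Finset.Icc 1 n, (μ[(X i) ^ 2 | 𝒢 (i - 1)]) ω) := by
      filter_upwards [hvar] with ω hv
      rw [← Real.exp_add, Real.exp_le_exp]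
      nlinarith [sq_nonneg l]
    calc ∫ ω, Real.exp (l * ∑ i ∈ Finset.Icc 1 n, X i ω) ∂μ
        ≤ ∫ ω, Real.exp (l ^ 2 * V) * Real.exp (l * ∑ i ∈ Finset.Icc 1 n, X i ω
          - l ^ 2 * ∑ i ∈ Finset.Icc 1 n, (μ[(X i) ^ 2 | 𝒢 (i - 1)]) ω) ∂μ :=
          integral_mono_ae hint1 (hintT.const_mul _) hmono
      _ = Real.exp (l ^ 2 * V) * ∫ ω, Real.exp (l * ∑ i ∈ Finset.Icc 1 n, X i ω
          - l ^ 2 * ∑ i ∈ Finset.Icc 1 n, (μ[(X i) ^ 2 | 𝒢 (i - 1)]) ω) ∂μ :=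
          integral_const_mul _ _
      _ ≤ Real.exp (l ^ 2 * V) * 1 := by
          exact mul_le_mul_of_nonneg_left hmgf (Real.exp_pos _).le
      _ = Real.exp (l ^ 2 * V) := mul_one _
  have hsub : {ω | t < ∑ i ∈ Finset.Icc 1 n, X i ω}
      ⊆ {ω | Real.exp (l * t) ≤ Real.exp (l * ∑ i ∈ Finset.Icc 1 n, X i ω)} := by
    intro ω hω
    simp only [Set.mem_setOf_eq] at hω ⊢
    rw [Real.exp_le_exp]
    exact mul_le_mul_of_nonneg_left hω.le hl
  have hmarkov := mul_meas_ge_le_integral_of_nonneg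
    (Filter.Eventually.of_forall fun ω => (Real.exp_pos (l * _)).le) hint1 (Real.exp (l * t))
  refine le_trans (measure_mono hsub) ?_
  set A := {ω | Real.exp (l * t) ≤ Real.exp (l * ∑ i ∈ Finset.Icc 1 n, X i ω)}
  have hfin : μ A ≠ ⊤ := measure_ne_top μ A
  have htoReal : (μ A).toReal ≤ Real.exp (l ^ 2 * V - l * t) := by
    have hε : 0 < Real.exp (l * t) := Real.exp_pos _
    rw [Real.exp_sub]
    rw [le_div_iff₀ hε]
    calc (μ A).toReal * Real.exp (l * t)
        = Real.exp (l * t) * (μ A).toReal := mul_comm _ _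
      _ ≤ ∫ ω, Real.exp (l * ∑ i ∈ Finset.Icc 1 n, X i ω) ∂μ := hmarkov
      _ ≤ Real.exp (l ^ 2 * V) := hES
  calc μ A = ENNReal.ofReal (μ A).toReal := (ENNReal.ofReal_toReal hfin).symm
    _ ≤ ENNReal.ofReal (Real.exp (l ^ 2 * V - l * t)) := ENNReal.ofReal_le_ofReal htoReal
theorem freedman_type_inequality
    {Ω : Type*} {m0 : MeasurableSpace Ω} (μ : Measure Ω) [IsProbabilityMeasure μ]
    (𝒢 : Filtration ℕ m0) (n : ℕ) (X : ℕ → Ω → ℝ)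
    (hmeas : ∀ i ∈ Finset.Icc 1 n, StronglyMeasurable[𝒢 i] (X i))
    (c : ℝ) (hc : 0 < c)
    (hcond : ∀ i ∈ Finset.Icc 1 n, μ[X i | 𝒢 (i - 1)] =ᵐ[μ] 0)
    (hbdd : ∀ i ∈ Finset.Icc 1 n, ∀ᵐ ω ∂μ, |X i ω| ≤ c)
    (V : ℝ) (hV : 0 ≤ V)
    (hvar : ∀ᵐ ω ∂μ, ∑ i ∈ Finset.Icc 1 n, (μ[(X i) ^ 2 | 𝒢 (i - 1)]) ω ≤ V)
    (δ : ℝ) (hδ0 : 0 < δ) (hδ1 : δ < 1) :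
    μ {ω | Real.sqrt (4 * V * Real.log (2 * n / δ)) + Real.sqrt 5 * c * Real.log (2 * n / δ)
        < |∑ i ∈ Finset.Icc 1 n, X i ω|} ≤ ENNReal.ofReal δ := by
  rcases Nat.eq_zero_or_pos n with hn | hn
  · subst hn
    have hempty : {ω : Ω | Real.sqrt (4 * V * Real.log (2 * (0:ℕ) / δ))
        + Real.sqrt 5 * c * Real.log (2 * (0:ℕ) / δ)
        < |∑ i ∈ Finset.Icc 1 0, X i ω|} = ∅ := by
      ext ω
      simp [Finset.Icc_eq_empty (by omega : ¬(1:ℕ) ≤ 0)]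
    rw [hempty]
    simp
  -- main case : n ≥ 1
  set L := Real.log (2 * n / δ) with hLdef
  have hn1 : (1:ℝ) ≤ n := Nat.one_le_cast.2 hn
  have hlogδ : Real.log δ < 0 := Real.log_neg hδ0 hδ1
  have hlog2 : 0 < Real.log 2 := Real.log_pos (by norm_num)
  have hL2 : Real.log 2 - Real.log δ ≤ L := by
    rw [hLdef, Real.log_div (by positivity) (ne_of_gt hδ0)]
    have : Real.log 2 ≤ Real.log (2 * n) := Real.log_le_log (by norm_num) (by nlinarith)
    linarith
  have hL0 : 0 < L := lt_of_lt_of_le (by linarith) hL2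
  set t := Real.sqrt (4 * V * L) + Real.sqrt 5 * c * L with htdef
  have hs5 : (2:ℝ) ≤ Real.sqrt 5 := by
    have h4 : Real.sqrt 4 ≤ Real.sqrt 5 := Real.sqrt_le_sqrt (by norm_num)
    rwa [show (4:ℝ) = 2 ^ 2 by norm_num, Real.sqrt_sq (by norm_num : (0:ℝ) ≤ 2)] at h4
  have hsq : Real.sqrt (4 * V * L) ^ 2 = 4 * V * L := Real.sq_sqrt (by positivity)
  have hsqnn : 0 ≤ Real.sqrt (4 * V * L) := Real.sqrt_nonneg _
  have htL : Real.sqrt 5 * c * L ≤ t := by nlinarith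
  have ht0 : 0 < t := lt_of_lt_of_le (by positivity) htL
  -- choose the exponent parameter
  obtain ⟨l, hl0, hlc, hexp⟩ : ∃ l, 0 ≤ l ∧ l * c ≤ 1 ∧
      Real.exp (l ^ 2 * V - l * t) ≤ δ / 2 := by
    rcases le_or_gt t (2 * V / c) with hcase | hcase
    · have hV0 : 0 < V := by
        rcases eq_or_lt_of_le hV with h | h
        · exfalso; rw [← h] at hcase; simp at hcase; linarith
        · exact h
      refine ⟨t / (2 * V), by positivity, ?_, ?_⟩
      · rw [div_mul_eq_mul_div, div_le_one (by positivity)]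
        rw [le_div_iff₀ hc] at hcase
        linarith
      · have harith : (t / (2 * V)) ^ 2 * V - t / (2 * V) * t = -(t ^ 2 / (4 * V)) := by
          field_simp
          ring
        rw [harith]
        have hkey : Real.log 2 - Real.log δ ≤ t ^ 2 / (4 * V) := by
          rw [le_div_iff₀ (by positivity)]
          have hab : 0 ≤ Real.sqrt (4 * V * L) * (Real.sqrt 5 * c * L) :=
            mul_nonneg hsqnn (by positivity)
          have ht2 : 4 * V * L ≤ t ^ 2 := by nlinarith [sq_nonneg (Real.sqrt 5 * c * L)]
          nlinarith [mul_le_mul_of_nonneg_right hL2 (by linarith : (0:ℝ) ≤ 4 * V)]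
        calc Real.exp (-(t ^ 2 / (4 * V))) ≤ Real.exp (Real.log (δ / 2)) := by
              rw [Real.exp_le_exp, Real.log_div (ne_of_gt hδ0) (by norm_num)]
              linarith
          _ = δ / 2 := Real.exp_log (by positivity)
    · refine ⟨1 / c, by positivity, by field_simp; exact le_rfl, ?_⟩
      have h2V : 2 * V < t * c := by rw [div_lt_iff₀ hc] at hcase; linarith
      have hu : (1 / c) * c = 1 := by field_simp
      have hu0 : 0 < 1 / c := by positivity
      have hkey : (1 / c) ^ 2 * V - (1 / c) * t ≤ Real.log δ - Real.log 2 := by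
        have e1 : (1 / c) ^ 2 * (t * c) = (1 / c) * t := by
          field_simp
        have e2 : (1 / c) ^ 2 * (2 * V) < (1 / c) * t := by
          calc (1 / c) ^ 2 * (2 * V) < (1 / c) ^ 2 * (t * c) := by
                exact mul_lt_mul_of_pos_left h2V (by positivity)
            _ = (1 / c) * t := e1
        have e3 : Real.sqrt 5 * L ≤ (1 / c) * t := by
          calc Real.sqrt 5 * L = (1 / c) * (Real.sqrt 5 * c * L) := by field_simp
            _ ≤ (1 / c) * t := mul_le_mul_of_nonneg_left htL hu0.le
        nlinarith
      calc Real.exp ((1 / c) ^ 2 * V - (1 / c) * t) ≤ Real.exp (Real.log (δ / 2)) := by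
            rw [Real.exp_le_exp, Real.log_div (ne_of_gt hδ0) (by norm_num)]
            linarith
        _ = δ / 2 := Real.exp_log (by positivity)
  -- the two one-sided tails
  have htail1 := my_tail μ 𝒢 n X hmeas c hc hcond hbdd V hV hvar l t hl0 hlc
  have htail2 : μ {ω | t < -∑ i ∈ Finset.Icc 1 n, X i ω}
      ≤ ENNReal.ofReal (Real.exp (l ^ 2 * V - l * t)) := by
    have hmeas' : ∀ i ∈ Finset.Icc 1 n, StronglyMeasurable[𝒢 i] (-(X i)) :=
      fun i hi => (hmeas i hi).neg
    have hcond' : ∀ i ∈ Finset.Icc 1 n, μ[-(X i) | 𝒢 (i - 1)] =ᵐ[μ] 0 := by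
      intro i hi
      refine (condExp_neg (X i) (𝒢 (i - 1))).trans ?_
      filter_upwards [hcond i hi] with ω hω
      simp [hω]
    have hbdd' : ∀ i ∈ Finset.Icc 1 n, ∀ᵐ ω ∂μ, |(-(X i)) ω| ≤ c := by
      intro i hi
      filter_upwards [hbdd i hi] with ω hω
      simpa using hω
    have hvar' : ∀ᵐ ω ∂μ, ∑ i ∈ Finset.Icc 1 n, (μ[(-(X i)) ^ 2 | 𝒢 (i - 1)]) ω ≤ V := by
      simpa only [neg_sq] using hvar
    have := my_tail μ 𝒢 n (fun i => -(X i)) hmeas' c hc hcond' hbdd' V hV hvar' l t hl0 hlc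
    have hset : {ω | t < ∑ i ∈ Finset.Icc 1 n, (-(X i)) ω}
        = {ω | t < -∑ i ∈ Finset.Icc 1 n, X i ω} := by
      ext ω
      simp [Finset.sum_neg_distrib]
    rwa [hset] at this
  have hsub : {ω | t < |∑ i ∈ Finset.Icc 1 n, X i ω|}
      ⊆ {ω | t < ∑ i ∈ Finset.Icc 1 n, X i ω} ∪ {ω | t < -∑ i ∈ Finset.Icc 1 n, X i ω} := by
    intro ω hω
    simp only [Set.mem_setOf_eq, Set.mem_union] at hω ⊢
    exact lt_abs.1 hω
  calc μ {ω | t < |∑ i ∈ Finset.Icc 1 n, X i ω|}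
      ≤ μ ({ω | t < ∑ i ∈ Finset.Icc 1 n, X i ω}
          ∪ {ω | t < -∑ i ∈ Finset.Icc 1 n, X i ω}) := measure_mono hsub
    _ ≤ μ {ω | t < ∑ i ∈ Finset.Icc 1 n, X i ω}
        + μ {ω | t < -∑ i ∈ Finset.Icc 1 n, X i ω} := measure_union_le _ _
    _ ≤ ENNReal.ofReal (Real.exp (l ^ 2 * V - l * t))
        + ENNReal.ofReal (Real.exp (l ^ 2 * V - l * t)) := add_le_add htail1 htail2
    _ ≤ ENNReal.ofReal (δ / 2) + ENNReal.ofReal (δ / 2) :=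
        add_le_add (ENNReal.ofReal_le_ofReal hexp) (ENNReal.ofReal_le_ofReal hexp)
    _ = ENNReal.ofReal δ := by
        rw [← ENNReal.ofReal_add (by positivity) (by positivity)]
        norm_num
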